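/- arXiv:1709.08469 — 2 statements merged into one kernel-verified Lean document; each statement's English description precedes it below -/
import Mathlib

section
/- Define F̃(m,k) = ∑_{l=0}^{min(k,m)} (−1)^m · C(m,l) · C(k−l+m−1, k−m) for positive integers m ≤ k (and extend by the same formula). Then the first contracted generalized polarization tensor of two disks, M₁₁^{cc}(λ) = π α² ∑_{k=1}^∞ F̃(1,k)² · k·e^{−2ks}/(λ − (1/2)e^{−2ks}), has infinitely many distinct simple poles in λ, located exactly at the points λ = (1/2)e^{−2ks}, k = 1, 2, 3, …, since F̃(1,k) ≠ 0 for all k ≥ 1. -/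
/-!
Since `F̃(1,k) = -(k+1)`, the coefficients `F̃(1,k)² k e^{-2ks}` are a polynomial times a
geometric sequence, hence summable, and the poles `(1/2)e^{-2ks}` form a strictly decreasing
sequence, so each of them is isolated from the others. Near an isolated pole `μₙ` every term of
`(λ - μₙ) ∑ cⱼ/(λ - μⱼ)` is bounded by `|cⱼ|`, and dominated convergence gives the residue `cₙ`.
-/

open Filter Topology

/-- `F̃(m,k) = ∑_{l=0}^{min(k,m)} (−1)^m C(m,l) C(k−l+m−1, k−m)`. -/
noncomputable def Ftil (m k : ℕ) : ℝ :=
  ∑ l ∈ Finset.range (min k m + 1),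
    (-1 : ℝ) ^ m * (m.choose l) * ((k - l + m - 1).choose (k - m))

section Residue

variable {𝕜 ι : Type*} [NontriviallyNormedField 𝕜]

lemma norm_mul_div_le_of_norm_le {a b c : 𝕜} (h : ‖a‖ ≤ ‖b‖) : ‖a * (c / b)‖ ≤ ‖c‖ := by
  rw [norm_mul, norm_div]
  rcases eq_or_ne b 0 with rfl | hb
  · simp
  calc ‖a‖ * (‖c‖ / ‖b‖) ≤ ‖b‖ * (‖c‖ / ‖b‖) := by gcongr
    _ = ‖c‖ := mul_div_cancel₀ _ (norm_ne_zero_iff.2 hb)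

lemma tendsto_sub_mul_tsum_div_sub [CompleteSpace 𝕜] {c μ : ι → 𝕜} {n : ι} {δ : ℝ}
    (hc : Summable (‖c ·‖)) (hδ : 0 < δ) (hsep : ∀ j ≠ n, δ ≤ ‖μ j - μ n‖) :
    Tendsto (fun x => (x - μ n) * ∑' j, c j / (x - μ j)) (𝓝[≠] μ n) (𝓝 (c n)) := by
  classical
  simp only [← tsum_mul_left]
  rw [← tsum_ite_eq n c]
  refine tendsto_tsum_of_dominated_convergence hc (fun j => ?_) ?_
  · split_ifs with hj
    · subst hj
      refine tendsto_const_nhds.congr' ?_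
      filter_upwards [self_mem_nhdsWithin] with x hx
      exact (mul_div_cancel₀ _ (sub_ne_zero.2 hx)).symm
    · have hμ : μ n - μ j ≠ 0 := fun h => by
        have := hsep j hj
        rw [norm_sub_rev, h, norm_zero] at this
        linarith
      have : ContinuousAt (fun x => (x - μ n) * (c j / (x - μ j))) (μ n) := by
        fun_prop (disch := exact hμ)
      simpa using this.tendsto.mono_left nhdsWithin_le_nhds
  · have hball : ∀ᶠ x in 𝓝[≠] μ n, ‖x - μ n‖ < δ / 2 := nhdsWithin_le_nhds <|
      Metric.eventually_nhds_iff.2 ⟨δ / 2, half_pos hδ, fun y hy => by rwa [dist_eq_norm] at hy⟩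
    filter_upwards [hball] with x hx j
    refine norm_mul_div_le_of_norm_le ?_
    rcases eq_or_ne j n with rfl | hj
    · exact le_rfl
    · have := norm_sub_sub_norm_sub_le_norm_sub (μ j) x (μ n)
      have := hsep j hj
      rw [norm_sub_rev x (μ j)] at *
      linarith

end Residue

lemma StrictAnti.exists_pos_forall_ne_le_abs_sub {μ : ℕ → ℝ} (hμ : StrictAnti μ) (n : ℕ) :
    ∃ δ > 0, ∀ j ≠ n, δ ≤ |μ j - μ n| := by
  obtain ⟨ε, hε, hbelow⟩ : ∃ ε > 0, ∀ j < n, ε ≤ μ j - μ n := by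
    cases n with
    | zero => exact ⟨1, one_pos, by simp⟩
    | succ m =>
      refine ⟨μ m - μ (m + 1), sub_pos.2 (hμ m.lt_succ_self), fun j hj => ?_⟩
      linarith [hμ.antitone (Nat.le_of_lt_succ hj)]
  refine ⟨min (μ n - μ (n + 1)) ε, lt_min (sub_pos.2 (hμ n.lt_succ_self)) hε, fun j hj => ?_⟩
  rcases hj.lt_or_gt with hjn | hnj
  · calc min (μ n - μ (n + 1)) ε ≤ μ j - μ n := (min_le_right _ _).trans (hbelow j hjn)
      _ ≤ |μ j - μ n| := le_abs_self _
  · calc min (μ n - μ (n + 1)) ε ≤ μ n - μ j :=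
          (min_le_left _ _).trans (by linarith [hμ.antitone (Nat.succ_le_of_lt hnj)])
      _ ≤ |μ j - μ n| := by rw [abs_sub_comm]; exact le_abs_self _

lemma Ftil_one (k : ℕ) : Ftil 1 k = -((k : ℝ) + 1) := by
  cases k with
  | zero => simp [Ftil]
  | succ n =>
    simp [Ftil, Finset.sum_range_succ]

lemma strictAnti_half_exp_neg_two_mul {s : ℝ} (hs : 0 < s) :
    StrictAnti (fun k : ℕ => (1 / 2 : ℝ) * Real.exp (-2 * k * s)) := by
  intro i j hij
  have : (i : ℝ) < j := by exact_mod_cast hij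
  dsimp only
  gcongr 1 / 2 * ?_
  exact Real.exp_lt_exp.2 (by nlinarith)

lemma summable_Ftil_one_sq_mul_exp {s : ℝ} (hs : 0 < s) :
    Summable (fun k : ℕ => Ftil 1 k ^ 2 * k * Real.exp (-2 * k * s)) := by
  have hr : ‖Real.exp (-2 * s)‖ < 1 := by
    rw [Real.norm_eq_abs, abs_of_pos (Real.exp_pos _), Real.exp_lt_one_iff]
    linarith
  have geom (m : ℕ) := summable_pow_mul_geometric_of_norm_lt_one m hr
  refine (((geom 3).add ((geom 2).mul_left 2)).add (geom 1)).congr fun k => ?_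
  rw [Ftil_one, show -2 * (k : ℝ) * s = k * (-2 * s) by ring, Real.exp_nat_mul]
  ring

/-- The first CGPT of two disks,
`M₁₁^{cc}(λ) = πα² ∑_{k≥1} F̃(1,k)² k e^{−2ks}/(λ − (1/2)e^{−2ks})`, has infinitely many
distinct simple poles, located exactly at the Neumann–Poincaré eigenvalues
`λ = (1/2)e^{−2ks}`, `k ≥ 1`: the coefficients `F̃(1,k)` never vanish, the pole
locations are pairwise distinct, and at each of them `(λ − λ_k)·M₁₁^{cc}(λ)` tends to the
nonzero residue `πα² F̃(1,k)² k e^{−2ks}`. -/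
theorem CGPT_two_disks_infinitely_many_poles (α s : ℝ) (hα : 0 < α) (hs : 0 < s) :
    (∀ k : ℕ, 1 ≤ k → Ftil 1 k ≠ 0) ∧
    Set.InjOn (fun k : ℕ => (1 / 2 : ℝ) * Real.exp (-2 * k * s)) {k : ℕ | 1 ≤ k} ∧
    (∀ k : ℕ, 1 ≤ k →
      Tendsto
        (fun lam : ℝ => (lam - (1 / 2) * Real.exp (-2 * k * s)) *
          (Real.pi * α ^ 2 * ∑' j : ℕ,
            (Ftil 1 (j + 1)) ^ 2 * ((j : ℝ) + 1) * Real.exp (-2 * ((j : ℝ) + 1) * s) /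
              (lam - (1 / 2) * Real.exp (-2 * ((j : ℝ) + 1) * s))))
        (𝓝[≠] ((1 / 2) * Real.exp (-2 * k * s)))
        (nhds (Real.pi * α ^ 2 * (Ftil 1 k) ^ 2 * k * Real.exp (-2 * k * s))) ∧
      Real.pi * α ^ 2 * (Ftil 1 k) ^ 2 * k * Real.exp (-2 * k * s) ≠ 0) := by
  have hFtil (k : ℕ) : Ftil 1 k ≠ 0 := by rw [Ftil_one]; exact neg_ne_zero.2 (by positivity)
  have hanti := strictAnti_half_exp_neg_two_mul hs
  refine ⟨fun k _ => hFtil k, hanti.injective.injOn, fun k hk => ⟨?_, ?_⟩⟩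
  · obtain ⟨n, rfl⟩ := Nat.exists_eq_add_of_le' hk
    obtain ⟨δ, hδ, hsep⟩ :=
      (hanti.comp_strictMono fun _ _ => Nat.succ_lt_succ).exists_pos_forall_ne_le_abs_sub n
    have hsum := (summable_nat_add_iff 1).2 (summable_Ftil_one_sq_mul_exp hs).norm
    have := (tendsto_sub_mul_tsum_div_sub hsum hδ hsep).const_mul (Real.pi * α ^ 2)
    simp only [Function.comp_apply] at this
    push_cast at this ⊢
    convert this using 2 <;> ring
  · have hk' : (k : ℝ) ≠ 0 := Nat.cast_ne_zero.2 (by omega)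
    simp [Real.pi_ne_zero, hα.ne', hFtil, hk', Real.exp_ne_zero]
end

section
/- Fix m ≥ 1, R = 1/2, and λ bounded away from 0 (and from all λ_n^+). As d → ∞ (with α ~ d/2, e^{s} ~ d), the multipole coefficient M_m^{(1)} of two disks satisfies |M_m^{(1)}| ≤ C·d^{−(m−1)} for a constant C independent of d; in particular M_m^{(1)} → 0 for every m ≥ 2, while M_1^{(1)} stays bounded. -/
open Filter

/-- `F(n,m,s) = ∑_{l=0}^{min(n,m)} (−1)^l C(m,l) C(m+n−l−1, m−1) e^{2ls}`. -/
noncomputable def hybF (n m : ℕ) (s : ℝ) : ℝ :=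
  ∑ l ∈ Finset.range (min n m + 1),
    (-1 : ℝ) ^ l * (m.choose l) * ((m + n - l - 1).choose (m - 1)) * Real.exp (2 * l * s)


lemma my_choose_le_two_pow (n k : ℕ) : n.choose k ≤ 2 ^ n := by
  rcases le_or_gt k n with h | h
  · rw [← Nat.sum_range_choose n]
    exact Finset.single_le_sum (fun i _ => Nat.zero_le _) (Finset.mem_range.mpr (by omega))
  · rw [Nat.choose_eq_zero_of_lt h]; exact Nat.zero_le _

lemma abs_hybF_le (n m : ℕ) (t : ℝ) (ht : 0 ≤ t) :
    |hybF (n + 1) m t| ≤ ((m : ℝ) + 1) * 2 ^ m * 2 ^ (m + n) *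
      Real.exp (2 * (min (n + 1) m : ℕ) * t) := by
  have hB : (0:ℝ) ≤ (2 : ℝ) ^ m * 2 ^ (m + n) * Real.exp (2 * (min (n + 1) m : ℕ) * t) := by
    positivity
  have key : ∀ l ∈ Finset.range (min (n + 1) m + 1),
      |(-1 : ℝ) ^ l * (m.choose l) * (((m + (n + 1) - l - 1).choose (m - 1) : ℕ) : ℝ) *
        Real.exp (2 * l * t)| ≤
      (2 : ℝ) ^ m * 2 ^ (m + n) * Real.exp (2 * (min (n + 1) m : ℕ) * t) := by
    intro l hl
    rw [Finset.mem_range] at hl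
    have hl' : l ≤ min (n + 1) m := by omega
    rw [abs_mul, abs_mul, abs_mul, abs_pow, abs_neg, abs_one, one_pow, one_mul,
      Nat.abs_cast, Nat.abs_cast, Real.abs_exp]
    have h1 : ((m.choose l : ℕ) : ℝ) ≤ 2 ^ m := by
      calc ((m.choose l : ℕ) : ℝ) ≤ ((2 ^ m : ℕ) : ℝ) :=
            Nat.cast_le.mpr (my_choose_le_two_pow m l)
      _ = 2 ^ m := by push_cast; ring
    have h2 : (((m + (n + 1) - l - 1).choose (m - 1) : ℕ) : ℝ) ≤ 2 ^ (m + n) := by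
      calc (((m + (n + 1) - l - 1).choose (m - 1) : ℕ) : ℝ)
          ≤ ((2 ^ (m + (n + 1) - l - 1) : ℕ) : ℝ) :=
            Nat.cast_le.mpr (my_choose_le_two_pow _ _)
        _ ≤ ((2 ^ (m + n) : ℕ) : ℝ) := by
            exact_mod_cast Nat.pow_le_pow_right (by norm_num) (by omega)
        _ = 2 ^ (m + n) := by push_cast; ring
    have h3 : Real.exp (2 * l * t) ≤ Real.exp (2 * (min (n + 1) m : ℕ) * t) := by
      apply Real.exp_le_exp.mpr
      have : (l : ℝ) ≤ ((min (n + 1) m : ℕ) : ℝ) := by exact_mod_cast hl'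
      nlinarith
    have hc2 : (0:ℝ) ≤ (((m + (n + 1) - l - 1).choose (m - 1) : ℕ) : ℝ) := Nat.cast_nonneg _
    exact mul_le_mul (mul_le_mul h1 h2 hc2 (by positivity)) h3 (Real.exp_nonneg _)
      (by positivity)
  calc |hybF (n + 1) m t| ≤ ∑ l ∈ Finset.range (min (n + 1) m + 1),
        |(-1 : ℝ) ^ l * (m.choose l) * (((m + (n + 1) - l - 1).choose (m - 1) : ℕ) : ℝ) *
          Real.exp (2 * l * t)| := Finset.abs_sum_le_sum_abs _ _
    _ ≤ (Finset.range (min (n + 1) m + 1)).card •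
          ((2 : ℝ) ^ m * 2 ^ (m + n) * Real.exp (2 * (min (n + 1) m : ℕ) * t)) :=
        Finset.sum_le_card_nsmul _ _ _ key
    _ ≤ ((m : ℝ) + 1) * 2 ^ m * 2 ^ (m + n) * Real.exp (2 * (min (n + 1) m : ℕ) * t) := by
        rw [Finset.card_range, nsmul_eq_mul]
        have h4 : ((min (n + 1) m + 1 : ℕ) : ℝ) ≤ (m : ℝ) + 1 := by
          have : min (n + 1) m ≤ m := min_le_right _ _
          exact_mod_cast Nat.succ_le_succ this
        calc ((min (n + 1) m + 1 : ℕ) : ℝ) *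
              ((2:ℝ) ^ m * 2 ^ (m + n) * Real.exp (2 * (min (n + 1) m : ℕ) * t))
            ≤ ((m : ℝ) + 1) * ((2:ℝ) ^ m * 2 ^ (m + n) *
              Real.exp (2 * (min (n + 1) m : ℕ) * t)) := mul_le_mul_of_nonneg_right h4 hB
          _ = _ := by ring

lemma term_bound (m n : ℕ) (hm : 1 ≤ m) (a t : ℝ) (ha : 0 < a) (ht : 0 < t)
    (hsinh : Real.sinh t = 2 * a) (h12 : Real.exp (-2 * t) ≤ 1 / 12) :
    a * ((n : ℝ) + 1) * Real.exp (-((n : ℝ) + 1) * t) *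
      |(1 / 2 : ℝ) ^ (m - 1) * Real.exp (-((n + 1 : ℕ) : ℝ) * t) /
        (2 * a ^ m * (Real.cosh t / Real.sinh t + 1) ^ m) * hybF (n + 1) m t| ≤
    ((m : ℝ) + 1) * 12 ^ m / a ^ (m - 1) * ((n : ℝ) + 1) * (1 / 6) ^ n := by
  obtain ⟨j, rfl⟩ : ∃ j, m = j + 1 := ⟨m - 1, by omega⟩
  set m := j + 1
  set m' : ℕ := min (n + 1) m with hm'
  have hm'le : m' ≤ n + 1 := min_le_left _ _
  have hm'm : m' ≤ m := min_le_right _ _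
  set k : ℕ := n + 1 - m' with hk
  have hsinhpos : 0 < Real.sinh t := by rw [hsinh]; linarith
  have hg2 : (2:ℝ) ≤ Real.cosh t / Real.sinh t + 1 := by
    have h := Real.sinh_lt_cosh (x := t)
    have : (1:ℝ) ≤ Real.cosh t / Real.sinh t := (one_le_div hsinhpos).mpr h.le
    linarith
  have hgpos : (0:ℝ) < Real.cosh t / Real.sinh t + 1 := by linarith
  have habs : |(1 / 2 : ℝ) ^ (m - 1) * Real.exp (-((n + 1 : ℕ) : ℝ) * t) /
        (2 * a ^ m * (Real.cosh t / Real.sinh t + 1) ^ m) * hybF (n + 1) m t| =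
      (1 / 2 : ℝ) ^ (m - 1) * Real.exp (-((n + 1 : ℕ) : ℝ) * t) /
        (2 * a ^ m * (Real.cosh t / Real.sinh t + 1) ^ m) * |hybF (n + 1) m t| := by
    rw [abs_mul, abs_of_pos (by positivity)]
  rw [habs]
  have hcast : (((n:ℕ) + 1 : ℕ) : ℝ) = (n : ℝ) + 1 := by push_cast; ring
  rw [hcast]
  set E1 : ℝ := Real.exp (-((n : ℝ) + 1) * t) with hE1
  set E2 : ℝ := Real.exp (2 * (m' : ℕ) * t) with hE2
  have hstep1 : a * ((n : ℝ) + 1) * E1 *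
      ((1 / 2 : ℝ) ^ (m - 1) * E1 / (2 * a ^ m * (Real.cosh t / Real.sinh t + 1) ^ m) *
        |hybF (n + 1) m t|) ≤
      a * ((n : ℝ) + 1) * E1 *
      ((1 / 2 : ℝ) ^ (m - 1) * E1 / (2 * a ^ m * 2 ^ m) *
        (((m : ℝ) + 1) * 2 ^ m * 2 ^ (m + n) * E2)) := by
    have hE1pos : 0 < E1 := Real.exp_pos _
    gcongr
    exact abs_hybF_le n m t ht.le
  refine hstep1.trans ?_
  -- rearrange equality
  have hrearr : a * ((n : ℝ) + 1) * E1 *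
      ((1 / 2 : ℝ) ^ (m - 1) * E1 / (2 * a ^ m * 2 ^ m) *
        (((m : ℝ) + 1) * 2 ^ m * 2 ^ (m + n) * E2)) =
      ((n : ℝ) + 1) * ((m : ℝ) + 1) * 2 ^ n / a ^ j * (E1 * E1 * E2) := by
    show a * ((n : ℝ) + 1) * E1 *
      ((1 / 2 : ℝ) ^ j * E1 / (2 * a ^ (j + 1) * 2 ^ (j + 1)) *
        (((m : ℝ) + 1) * 2 ^ (j + 1) * 2 ^ (j + 1 + n) * E2)) = _
    rw [pow_succ, pow_add, pow_succ, one_div, inv_pow]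
    field_simp
    ring
  rw [hrearr]
  have hEE : E1 * E1 * E2 ≤ (1 / 12 : ℝ) ^ k := by
    have : E1 * E1 * E2 = Real.exp ((k : ℝ) * (-2 * t)) := by
      rw [hE1, hE2, ← Real.exp_add, ← Real.exp_add]
      congr 1
      have : ((k : ℕ) : ℝ) = ((n : ℝ) + 1) - (m' : ℝ) := by
        rw [hk]; push_cast [Nat.cast_sub hm'le]; ring
      rw [this]; ring
    rw [this, Real.exp_nat_mul]
    exact pow_le_pow_left₀ (Real.exp_nonneg _) h12 k
  have h2n : (0:ℝ) ≤ ((n : ℝ) + 1) * ((m : ℝ) + 1) * 2 ^ n / a ^ j := by positivity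
  have hfinal : ((n : ℝ) + 1) * ((m : ℝ) + 1) * 2 ^ n / a ^ j * (1 / 12 : ℝ) ^ k ≤
      ((m : ℝ) + 1) * 12 ^ m / a ^ (m - 1) * ((n : ℝ) + 1) * (1 / 6) ^ n := by
    have hkey : (2:ℝ) ^ n * (1 / 12 : ℝ) ^ k ≤ 12 ^ m * (1 / 6) ^ n := by
      have h1 : (1/12:ℝ) ^ (k + m) ≤ (1/12) ^ n :=
        pow_le_pow_of_le_one (by norm_num) (by norm_num) (by omega)
      have h2 : (1/12:ℝ) ^ k ≤ 12 ^ m * (1/12) ^ n := by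
        have hq : ((1/12:ℝ) ^ k * (1/12) ^ m) * 12 ^ m ≤ (1/12) ^ n * 12 ^ m := by
          rw [← pow_add]
          exact mul_le_mul_of_nonneg_right h1 (by positivity)
        calc (1/12:ℝ) ^ k = ((1/12:ℝ) ^ k * (1/12) ^ m) * 12 ^ m := by
              rw [mul_assoc, ← mul_pow]; norm_num
          _ ≤ (1/12) ^ n * 12 ^ m := hq
          _ = 12 ^ m * (1/12) ^ n := by ring
      calc (2:ℝ) ^ n * (1 / 12 : ℝ) ^ k ≤ 2 ^ n * (12 ^ m * (1/12) ^ n) :=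
            mul_le_mul_of_nonneg_left h2 (by positivity)
        _ = 12 ^ m * (2 * (1/12)) ^ n := by rw [mul_pow]; ring
        _ = 12 ^ m * (1 / 6) ^ n := by norm_num
    have hmj : m - 1 = j := by omega
    rw [hmj]
    calc ((n : ℝ) + 1) * ((m : ℝ) + 1) * 2 ^ n / a ^ j * (1 / 12 : ℝ) ^ k
        = (((n : ℝ) + 1) * ((m : ℝ) + 1) / a ^ j) * (2 ^ n * (1/12) ^ k) := by ring
      _ ≤ (((n : ℝ) + 1) * ((m : ℝ) + 1) / a ^ j) * (12 ^ m * (1/6) ^ n) := by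
          apply mul_le_mul_of_nonneg_left hkey (by positivity)
      _ = ((m : ℝ) + 1) * 12 ^ m / a ^ j * ((n : ℝ) + 1) * (1 / 6) ^ n := by ring
  calc ((n : ℝ) + 1) * ((m : ℝ) + 1) * 2 ^ n / a ^ j * (E1 * E1 * E2)
      ≤ ((n : ℝ) + 1) * ((m : ℝ) + 1) * 2 ^ n / a ^ j * (1 / 12 : ℝ) ^ k :=
        mul_le_mul_of_nonneg_left hEE h2n
    _ ≤ _ := hfinal

set_option maxHeartbeats 1000000

/-- For two disks of radius `R = 1/2` at separation `d` (bipolar parameters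
`α = √(d(1/2+d/4))`, `s = arsinh(2α)`), with `λ` bounded away from `0` and from all the
eigenvalues `(1/2)e^{−2ns(d)}`, the multipole coefficient `M_m^{(1)}(d)` satisfies
`|M_m^{(1)}(d)| ≤ C d^{−(m−1)}`; in particular `M_m^{(1)}(d) → 0` for `m ≥ 2`. -/
theorem multipole_coefficients_decay (m : ℕ) (hm : 1 ≤ m) (lam : ℂ) (δ : ℝ) (hδ : 0 < δ)
    (hlam : δ ≤ ‖lam‖) :
    ∀ (α s : ℝ → ℝ) (b : ℝ → ℕ → ℕ → ℝ) (Mm : ℝ → ℂ),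
      (α = fun d => Real.sqrt (d * (1 / 2 + d / 4))) →
      (s = fun d => Real.arsinh (α d / (1 / 2))) →
      (∀ d : ℝ, 1 ≤ d → ∀ n : ℕ, 1 ≤ n →
        δ ≤ ‖lam - ((1 / 2 : ℝ) * Real.exp (-2 * n * s d) : ℝ)‖) →
      (b = fun (d : ℝ) (n k : ℕ) => (1 / 2 : ℝ) ^ (k - 1) * Real.exp (-(n : ℝ) * s d) /
          (2 * (α d) ^ k * (Real.cosh (s d) / Real.sinh (s d) + 1) ^ k) * hybF n k (s d)) →
      (Mm = fun d => ((1 / 2 : ℝ) ^ (m + 1) / (2 * (m : ℝ)) : ℝ) *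
        ∑' n : ℕ,
          ((α d * ((n : ℝ) + 1) * Real.exp (-((n : ℝ) + 1) * s d) : ℝ) : ℂ) /
              (lam - ((1 / 2 : ℝ) * Real.exp (-2 * ((n : ℝ) + 1) * s d) : ℝ)) *
            ((b d (n + 1) m : ℝ) : ℂ)) →
      (∃ C : ℝ, ∀ d : ℝ, 1 ≤ d → ‖Mm d‖ ≤ C * d ^ (1 - (m : ℤ))) ∧
      (2 ≤ m → Tendsto Mm atTop (nhds 0)) := by
  intro α s b Mm hα hs hlamn hb hMm
  -- the summable majorant series
  have hS : Summable (fun n : ℕ => ((n : ℝ) + 1) * (1 / 6) ^ n) := by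
    have h1 : Summable (fun n : ℕ => (n : ℝ) ^ 1 * (1 / 6 : ℝ) ^ n) :=
      summable_pow_mul_geometric_of_norm_lt_one 1
        (by rw [Real.norm_eq_abs, abs_of_nonneg (by norm_num : (0:ℝ) ≤ 1/6)]; norm_num)
    have h2 : Summable (fun n : ℕ => (1 / 6 : ℝ) ^ n) :=
      summable_geometric_of_lt_one (by norm_num) (by norm_num)
    have := h1.add h2
    convert this using 2 with n
    ring
  set S : ℝ := ∑' n : ℕ, ((n : ℝ) + 1) * (1 / 6) ^ n with hSdef
  have hSnn : 0 ≤ S := tsum_nonneg fun n => by positivity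
  set c0 : ℝ := (1 / 2 : ℝ) ^ (m + 1) / (2 * (m : ℝ)) with hc0def
  have hmR : (0:ℝ) < (m : ℝ) := by exact_mod_cast hm
  have hc0 : 0 < c0 := by rw [hc0def]; positivity
  set K : ℝ := ((m : ℝ) + 1) * 12 ^ m with hKdef
  have hK : 0 < K := by rw [hKdef]; positivity
  set C : ℝ := c0 * K * S * 2 ^ (m - 1) / δ with hCdef
  have key : ∀ d : ℝ, 1 ≤ d → ‖Mm d‖ ≤ C * d ^ (1 - (m : ℤ)) := by
    intro d hd
    have hd0 : (0:ℝ) < d := lt_of_lt_of_le one_pos hd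
    set a : ℝ := α d with hadef
    set t : ℝ := s d with htdef
    have haval : a = Real.sqrt (d * (1 / 2 + d / 4)) := by rw [hadef, hα]
    have ha : 0 < a := by rw [haval]; exact Real.sqrt_pos.mpr (by nlinarith)
    have hasq : a ^ 2 = d * (1 / 2 + d / 4) := by
      rw [haval]; exact Real.sq_sqrt (by nlinarith)
    have hda : d / 2 ≤ a := by
      nlinarith [sq_nonneg (a - d / 2)]
    have hsinh : Real.sinh t = 2 * a := by
      rw [htdef, hs]
      simp only
      rw [← hadef, Real.sinh_arsinh]
      ring
    have ht : 0 < t := by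
      by_contra h
      push_neg at h
      have : Real.sinh t ≤ 0 := by
        calc Real.sinh t ≤ Real.sinh 0 := Real.sinh_le_sinh.mpr h
          _ = 0 := Real.sinh_zero
      nlinarith
    have hasq34 : (3:ℝ) / 4 ≤ a ^ 2 := by nlinarith
    have h12 : Real.exp (-2 * t) ≤ 1 / 12 := by
      have hexp : 4 * a ≤ Real.exp t := by
        have h1 : Real.sinh t + Real.cosh t = Real.exp t := Real.sinh_add_cosh t
        have h2 : Real.sinh t < Real.cosh t := Real.sinh_lt_cosh t
        nlinarith
      have hsqm : (4 * a) * (4 * a) ≤ Real.exp t * Real.exp t :=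
        mul_le_mul hexp hexp (by positivity) (Real.exp_pos t).le
      have h2t : (12:ℝ) ≤ Real.exp (2 * t) := by
        rw [two_mul, Real.exp_add]
        nlinarith [hsqm, hasq34]
      rw [show (-2 : ℝ) * t = -(2 * t) by ring, Real.exp_neg, one_div]
      exact inv_anti₀ (by norm_num) h2t
    -- term function
    set T : ℕ → ℂ := fun n =>
      ((a * ((n : ℝ) + 1) * Real.exp (-((n : ℝ) + 1) * t) : ℝ) : ℂ) /
          (lam - ((1 / 2 : ℝ) * Real.exp (-2 * ((n : ℝ) + 1) * t) : ℝ)) *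
        ((b d (n + 1) m : ℝ) : ℂ) with hTdef
    have hMmd : Mm d = ((c0 : ℝ) : ℂ) * ∑' n : ℕ, T n := by
      rw [hMm]
    set g : ℕ → ℝ := fun n => (K / (δ * a ^ (m - 1))) * (((n : ℝ) + 1) * (1 / 6) ^ n)
      with hgdef
    have hTn : ∀ n : ℕ, ‖T n‖ ≤ g n := by
      intro n
      have hD : δ ≤ ‖lam - (((1 / 2 : ℝ) * Real.exp (-2 * ((n : ℝ) + 1) * t) : ℝ) : ℂ)‖ := by
        have := hlamn d hd (n + 1) (by omega)
        rw [← htdef] at this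
        push_cast at this
        convert this using 4
        push_cast
        ring
      have hDpos : 0 < ‖lam - (((1 / 2 : ℝ) * Real.exp (-2 * ((n : ℝ) + 1) * t) : ℝ) : ℂ)‖ :=
        lt_of_lt_of_le hδ hD
      have hbval : b d (n + 1) m = (1 / 2 : ℝ) ^ (m - 1) * Real.exp (-((n + 1 : ℕ) : ℝ) * t) /
          (2 * a ^ m * (Real.cosh t / Real.sinh t + 1) ^ m) * hybF (n + 1) m t := by
        rw [hb]
      have hA : 0 ≤ a * ((n : ℝ) + 1) * Real.exp (-((n : ℝ) + 1) * t) := by positivity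
      calc ‖T n‖ = a * ((n : ℝ) + 1) * Real.exp (-((n : ℝ) + 1) * t) * |b d (n + 1) m| /
            ‖lam - (((1 / 2 : ℝ) * Real.exp (-2 * ((n : ℝ) + 1) * t) : ℝ) : ℂ)‖ := by
            rw [hTdef]
            simp only
            rw [norm_mul, norm_div, Complex.norm_real, Complex.norm_real,
              Real.norm_eq_abs, Real.norm_eq_abs, abs_of_nonneg hA]
            ring
        _ ≤ a * ((n : ℝ) + 1) * Real.exp (-((n : ℝ) + 1) * t) * |b d (n + 1) m| / δ := by
            gcongr
        _ ≤ (((m : ℝ) + 1) * 12 ^ m / a ^ (m - 1) * ((n : ℝ) + 1) * (1 / 6) ^ n) / δ := by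
            apply (div_le_div_iff_of_pos_right hδ).mpr
            rw [hbval]
            exact term_bound m n hm a t ha ht hsinh h12
        _ = g n := by rw [hgdef, hKdef]; ring
    have hg : Summable g := hS.mul_left _
    have hTnorm : Summable (fun n => ‖T n‖) :=
      Summable.of_nonneg_of_le (fun n => norm_nonneg _) hTn hg
    have hTsummable : Summable T := hTnorm.of_norm
    have htsumg : ∑' n, g n = (K / (δ * a ^ (m - 1))) * S := tsum_mul_left
    have hzpow : d ^ (1 - (m : ℤ)) = (d ^ (m - 1 : ℕ))⁻¹ := by
      have h1 : (1 - (m : ℤ)) = -((m - 1 : ℕ) : ℤ) := by omega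
      rw [h1, zpow_neg, zpow_natCast]
    have hpow : (d / 2) ^ (m - 1) ≤ a ^ (m - 1) :=
      pow_le_pow_left₀ (by linarith) hda _
    calc ‖Mm d‖ = |c0| * ‖∑' n, T n‖ := by
          rw [hMmd, norm_mul, Complex.norm_real, Real.norm_eq_abs]
      _ ≤ c0 * ∑' n, ‖T n‖ := by
          rw [abs_of_pos hc0]
          exact mul_le_mul_of_nonneg_left (norm_tsum_le_tsum_norm hTnorm) hc0.le
      _ ≤ c0 * ∑' n, g n := by
          apply mul_le_mul_of_nonneg_left (Summable.tsum_le_tsum hTn hTnorm hg) hc0.le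
      _ = c0 * (K / (δ * a ^ (m - 1)) * S) := by rw [htsumg]
      _ = (c0 * K * S / δ) * (1 / a ^ (m - 1)) := by ring
      _ ≤ (c0 * K * S / δ) * (2 ^ (m - 1) / d ^ (m - 1)) := by
          have hnn : 0 ≤ c0 * K * S / δ := by positivity
          apply mul_le_mul_of_nonneg_left _ hnn
          have h1 : (1:ℝ) / a ^ (m - 1) ≤ 1 / ((d / 2) ^ (m - 1)) :=
            one_div_le_one_div_of_le (by positivity) hpow
          have h2 : (1:ℝ) / ((d / 2) ^ (m - 1)) = 2 ^ (m - 1) / d ^ (m - 1) := by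
            rw [div_pow, one_div_div]
          rw [h2] at h1
          exact h1
      _ = C * d ^ (1 - (m : ℤ)) := by
          rw [hzpow, hCdef]
          field_simp
  refine ⟨⟨C, key⟩, ?_⟩
  intro hm2
  have h0 : Tendsto (fun d : ℝ => C * d ^ (1 - (m : ℤ))) atTop (nhds 0) := by
    have h1 : Tendsto (fun d : ℝ => d ^ (1 - (m : ℤ))) atTop (nhds 0) :=
      tendsto_zpow_atTop_zero (by omega)
    simpa using h1.const_mul C
  exact squeeze_zero_norm'
    (by filter_upwards [eventually_ge_atTop (1 : ℝ)] with d hd using key d hd) h0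
end
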